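/- arXiv:1406.0762 — 2 statements merged into one kernel-verified Lean document; each statement's English description precedes it below -/
import Mathlib

section
/- For the product Laguerre weight with parameters α, β > -1, the Gram matrix D_n := ⟨𝕼_n, 𝕼_n^T⟩_∇ of the vector 𝕼_n = (Q_0^n,...,Q_n^n)^T is diagonal, with entries d_j^n = (n-j)² h_j^{n-1} + j² h_{j-1}^{n-1} + 2 j² (n-j)² h_{j-1}^{n-2}, where h_k^m = (m-k)! k! (α+1)_{m-k} (β+1)_k. -/
open Finset MeasureTheory

/-- The classical Laguerre polynomial. -/
noncomputable def laguerre (α : ℝ) (n : ℕ) (x : ℝ) : ℝ :=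
  ∑ k ∈ Finset.range (n + 1),
    (-1) ^ k * (Real.Gamma ((n : ℝ) + α + 1) /
      (Real.Gamma ((k : ℝ) + α + 1) * (n - k).factorial)) * x ^ k / k.factorial

/-- The monic Laguerre polynomial `p_n(w_α;x) = (-1)^n n! L_n^α(x)`. -/
noncomputable def lagMonic (α : ℝ) (n : ℕ) (x : ℝ) : ℝ :=
  (-1) ^ n * n.factorial * laguerre α n x

/-- `q_n(w_α;x) = p_n(w_α;x) + n·p_{n-1}(w_α;x)`. -/
noncomputable def lagQ (α : ℝ) (n : ℕ) (x : ℝ) : ℝ :=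
  lagMonic α n x + n * lagMonic α (n - 1) x

/-- The normalized gradient bilinear form for the product Laguerre weight
`W_{α,β}(x,y) = x^α e^{-x} y^β e^{-y}` on `[0,∞)²`. -/
noncomputable def lagGrad (α β : ℝ) (f g : ℝ → ℝ → ℝ) : ℝ :=
  (1 / (Real.Gamma (α + 1) * Real.Gamma (β + 1))) *
    ∫ p in (Set.Ioi (0 : ℝ)) ×ˢ (Set.Ioi (0 : ℝ)),
      (deriv (fun t => f t p.2) p.1 * deriv (fun t => g t p.2) p.1 +
        deriv (fun t => f p.1 t) p.2 * deriv (fun t => g p.1 t) p.2) *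
      (Real.rpow p.1 α * Real.exp (-p.1) * (Real.rpow p.2 β * Real.exp (-p.2)))

/-- Evaluation of a bivariate polynomial as a function of two real variables. -/
noncomputable def pev (P : MvPolynomial (Fin 2) ℝ) (x y : ℝ) : ℝ :=
  MvPolynomial.eval ![x, y] P

/-- The product monic Laguerre polynomials `P_k^n(x,y) = p_{n-k}(w_α;x) p_k(w_β;y)`. -/
noncomputable def lagP (α β : ℝ) (n k : ℕ) (x y : ℝ) : ℝ :=
  lagMonic α (n - k) x * lagMonic β k y

/-- The polynomials `Q_k^n(x,y) = q_{n-k}(w_α;x) q_k(w_β;y)`. -/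
noncomputable def lagQ2 (α β : ℝ) (n k : ℕ) (x y : ℝ) : ℝ :=
  lagQ α (n - k) x * lagQ β k y

/-- `h_k^m = (m-k)!·k!·(α+1)_{m-k}·(β+1)_k`. -/
noncomputable def hkn (α β : ℝ) (k m : ℕ) : ℝ :=
  ((m - k).factorial : ℝ) * k.factorial *
    (ascPochhammer ℝ (m - k)).eval (α + 1) * (ascPochhammer ℝ k).eval (β + 1)

/-! The monic Laguerre polynomials `p_m` are orthogonal for the weight `x^γ e^{-x}` on `(0, ∞)`,
with `⟨p_m, p_m⟩ = m! (γ+1)_m Γ(γ+1)`: the moment `∫ p_m(x) x^l x^γ e^{-x} dx` is `Γ(m+γ+1)` times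
the `m`-th forward difference of the degree-`l` polynomial `k ↦ (γ+1+k)_l`, which vanishes for
`l < m`. Moreover `q_m' = m p_{m-1}`. By Fubini the gradient form of two products `Q_i^n`, `Q_j^n`
splits as `⟨q_{n-i}', q_{n-j}'⟩_α ⟨q_i, q_j⟩_β + ⟨q_{n-i}, q_{n-j}⟩_α ⟨q_i', q_j'⟩_β`, and
orthogonality of the `p_m` kills the off-diagonal entries and gives the diagonal ones. -/

open Polynomial

theorem Real.Gamma_add_nat_eq_ascPochhammer_mul {x : ℝ} (hx : ∀ k : ℕ, x ≠ -k) (l : ℕ) :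
    Real.Gamma (x + l) = (ascPochhammer ℝ l).eval x * Real.Gamma x := by
  induction l with
  | zero => simp
  | succ l ih =>
    have hxl : x + l ≠ 0 := fun h => hx l (by linarith)
    rw [Nat.cast_succ, ← add_assoc, Real.Gamma_add_one hxl, ih, ascPochhammer_succ_right]
    simp only [eval_mul, eval_add, eval_X, eval_natCast]
    ring

theorem sum_range_neg_one_pow_mul_choose_mul_ascPochhammer_eval {R : Type*} [CommRing R]
    [IsDomain R] {l m : ℕ} (hl : l ≤ m) (c : R) :
    ∑ k ∈ range (m + 1), (-1 : R) ^ (m - k) * m.choose k * (ascPochhammer R l).eval (c + k) =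
      if l = m then (m.factorial : R) else 0 := by
  have hΔ := fwdDiff_iter_eq_sum_shift (1 : R) (ascPochhammer R l).eval m c
  simp only [nsmul_one, zsmul_eq_mul, Int.cast_mul, Int.cast_pow, Int.cast_neg, Int.cast_one,
    Int.cast_natCast] at hΔ
  rw [← hΔ]
  split_ifs with h
  · subst h
    have := (ascPochhammer R l).fwdDiff_iter_degree_eq_factorial
    rw [ascPochhammer_natDegree, (monic_ascPochhammer R l).leadingCoeff, one_smul] at this
    simp [this]
  · rw [Polynomial.fwdDiff_iter_eq_zero_of_degree_lt (by rw [ascPochhammer_natDegree]; omega)]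
    rfl

noncomputable def lagWeight (γ x : ℝ) : ℝ :=
  x ^ γ * Real.exp (-x)

-- `n.choose k` vanishes for `k > n`, so this is the `k`-th coefficient of `p_n` for every `k`.
noncomputable def lagMonicCoeff (γ : ℝ) (n k : ℕ) : ℝ :=
  (-1) ^ (n + k) * n.choose k * (Real.Gamma ((n : ℝ) + γ + 1) / Real.Gamma ((k : ℝ) + γ + 1))

noncomputable def lagMonicPoly (γ : ℝ) (n : ℕ) : ℝ[X] :=
  ∑ k ∈ range (n + 1), C (lagMonicCoeff γ n k) * X ^ k

noncomputable def lagQPoly (γ : ℝ) (n : ℕ) : ℝ[X] :=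
  lagMonicPoly γ n + C (n : ℝ) * lagMonicPoly γ (n - 1)

noncomputable def lagInner (γ : ℝ) (P Q : ℝ[X]) : ℝ :=
  (Real.Gamma (γ + 1))⁻¹ * ∫ x in Set.Ioi 0, P.eval x * Q.eval x * lagWeight γ x

noncomputable def lagNorm (γ : ℝ) (m : ℕ) : ℝ :=
  m.factorial * (ascPochhammer ℝ m).eval (γ + 1)

section Laguerre

variable {γ : ℝ}

theorem natCast_add_add_one_pos (hγ : -1 < γ) (k : ℕ) : 0 < (k : ℝ) + γ + 1 := by
  have := k.cast_nonneg (α := ℝ)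
  linarith

variable (γ) in
theorem lagMonic_eq_eval (n : ℕ) : lagMonic γ n = fun x => (lagMonicPoly γ n).eval x := by
  funext x
  simp only [lagMonic, laguerre, lagMonicPoly, eval_finsetSum, eval_mul, eval_C, eval_pow, eval_X,
    Finset.mul_sum]
  refine Finset.sum_congr rfl fun k hk => ?_
  rw [lagMonicCoeff, Nat.cast_choose ℝ (Nat.lt_succ_iff.mp (Finset.mem_range.mp hk)), pow_add]
  ring

variable (γ) in
theorem lagQ_eq_eval (n : ℕ) : lagQ γ n = fun x => (lagQPoly γ n).eval x := by
  funext x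
  simp [lagQ, lagQPoly, lagMonic_eq_eval]

variable (γ) in
theorem coeff_lagMonicPoly (n k : ℕ) : (lagMonicPoly γ n).coeff k = lagMonicCoeff γ n k := by
  simp only [lagMonicPoly, finsetSum_coeff, coeff_C_mul_X_pow, Finset.sum_ite_eq, Finset.mem_range]
  split_ifs with hk
  · rfl
  · simp [lagMonicCoeff, Nat.choose_eq_zero_of_lt (by omega : n < k)]

variable (γ) in
theorem natDegree_lagMonicPoly_le (n : ℕ) : (lagMonicPoly γ n).natDegree ≤ n :=
  natDegree_le_iff_coeff_eq_zero.mpr fun k hk => by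
    rw [coeff_lagMonicPoly, lagMonicCoeff, Nat.choose_eq_zero_of_lt (by exact_mod_cast hk)]
    simp

theorem lagMonicCoeff_self (hγ : -1 < γ) (n : ℕ) : lagMonicCoeff γ n n = 1 := by
  have : Real.Gamma ((n : ℝ) + γ + 1) ≠ 0 :=
    (Real.Gamma_pos_of_pos (natCast_add_add_one_pos hγ n)).ne'
  simp [lagMonicCoeff, ← two_mul, pow_mul, this]

variable (γ) in
theorem lagMonicCoeff_of_lt {n k : ℕ} (h : n < k) : lagMonicCoeff γ n k = 0 := by
  simp [lagMonicCoeff, Nat.choose_eq_zero_of_lt h]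

theorem add_one_mul_lagMonicCoeff (hγ : -1 < γ) (m t : ℕ) :
    (t + 1) * (lagMonicCoeff γ (m + 1) (t + 1) + (m + 1) * lagMonicCoeff γ m (t + 1)) =
      (m + 1) * lagMonicCoeff γ m t := by
  have ht := (natCast_add_add_one_pos hγ t).ne'
  have hΓt := (Real.Gamma_pos_of_pos (natCast_add_add_one_pos hγ t)).ne'
  have hΓ : ∀ k : ℕ, Real.Gamma (((k + 1 : ℕ) : ℝ) + γ + 1) =
      ((k : ℝ) + γ + 1) * Real.Gamma ((k : ℝ) + γ + 1) := fun k => by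
    rw [← Real.Gamma_add_one (natCast_add_add_one_pos hγ k).ne']; push_cast; ring_nf
  have hc₁ : ((m + 1).choose (t + 1) : ℝ) * (t + 1) = (m + 1) * m.choose t := by
    exact_mod_cast (Nat.add_one_mul_choose_eq m t).symm
  have hc₂ : (m.choose (t + 1) : ℝ) * (t + 1) = m.choose t * ((m : ℝ) - t) := by
    rcases le_or_gt t m with h | h
    · rw [← Nat.cast_sub h]; exact_mod_cast Nat.choose_succ_right_eq m t
    · simp [Nat.choose_eq_zero_of_lt h, Nat.choose_eq_zero_of_lt (h.trans (Nat.lt_succ_self t))]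
  simp only [lagMonicCoeff, hΓ]
  field_simp
  linear_combination (-1) ^ (m + t) * Real.Gamma ((m : ℝ) + γ + 1) *
    (((m : ℝ) + γ + 1) * hc₁ - ((m : ℝ) + 1) * hc₂)

theorem derivative_lagQPoly (hγ : -1 < γ) (n : ℕ) :
    derivative (lagQPoly γ n) = C (n : ℝ) * lagMonicPoly γ (n - 1) := by
  ext t
  rcases n with _ | m
  · simp [lagQPoly, coeff_derivative, coeff_lagMonicPoly, lagMonicCoeff_of_lt]
  · simp only [lagQPoly, coeff_derivative, coeff_add, coeff_C_mul, coeff_lagMonicPoly,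
      Nat.add_sub_cancel]
    push_cast
    linear_combination add_one_mul_lagMonicCoeff hγ m t

theorem integral_pow_mul_lagWeight (hγ : -1 < γ) (k : ℕ) :
    ∫ x in Set.Ioi 0, x ^ k * lagWeight γ x = Real.Gamma ((k : ℝ) + γ + 1) := by
  rw [Real.Gamma_eq_integral (natCast_add_add_one_pos hγ k)]
  refine setIntegral_congr_fun measurableSet_Ioi fun x (hx : 0 < x) => ?_
  rw [lagWeight, add_sub_cancel_right, Real.rpow_add hx, Real.rpow_natCast]
  ring

theorem integrableOn_pow_mul_lagWeight (hγ : -1 < γ) (k : ℕ) :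
    IntegrableOn (fun x : ℝ => x ^ k * lagWeight γ x) (Set.Ioi 0) := by
  refine (Real.GammaIntegral_convergent (natCast_add_add_one_pos hγ k)).congr_fun
    (fun x (hx : 0 < x) => ?_) measurableSet_Ioi
  dsimp only [lagWeight]
  rw [add_sub_cancel_right, Real.rpow_add hx, Real.rpow_natCast]
  ring

theorem integrableOn_eval_mul_lagWeight (hγ : -1 < γ) (P : ℝ[X]) :
    IntegrableOn (fun x : ℝ => P.eval x * lagWeight γ x) (Set.Ioi 0) := by
  simp_rw [eval_eq_sum_range, Finset.sum_mul, mul_assoc]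
  exact integrable_finsetSum _ fun k _ => (integrableOn_pow_mul_lagWeight hγ k).const_mul _

theorem integrableOn_eval_mul_eval_mul_lagWeight (hγ : -1 < γ) (P Q : ℝ[X]) :
    IntegrableOn (fun x : ℝ => P.eval x * Q.eval x * lagWeight γ x) (Set.Ioi 0) := by
  simpa only [eval_mul] using integrableOn_eval_mul_lagWeight hγ (P * Q)

theorem integral_lagMonicPoly_mul_pow (hγ : -1 < γ) {l m : ℕ} (hl : l ≤ m) :
    ∫ x in Set.Ioi 0, (lagMonicPoly γ m).eval x * x ^ l * lagWeight γ x =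
      if l = m then m.factorial * Real.Gamma ((m : ℝ) + γ + 1) else 0 := by
  have hterm : ∀ k ∈ range (m + 1), lagMonicCoeff γ m k * Real.Gamma (((k + l : ℕ) : ℝ) + γ + 1) =
      Real.Gamma ((m : ℝ) + γ + 1) *
        ((-1) ^ (m - k) * m.choose k * (ascPochhammer ℝ l).eval ((γ + 1) + k)) := by
    intro k hk
    have hkm : k ≤ m := Nat.lt_succ_iff.mp (Finset.mem_range.mp hk)
    have hpos := natCast_add_add_one_pos hγ k
    rw [show ((k + l : ℕ) : ℝ) + γ + 1 = ((k : ℝ) + γ + 1) + l by push_cast; ring,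
      Real.Gamma_add_nat_eq_ascPochhammer_mul (fun j h => by linarith [j.cast_nonneg (α := ℝ)]),
      lagMonicCoeff, show m + k = m - k + 2 * k by omega, pow_add, pow_mul, neg_one_sq, one_pow,
      mul_one, show (γ + 1) + (k : ℝ) = k + γ + 1 by ring]
    field_simp [(Real.Gamma_pos_of_pos hpos).ne']
  have hexpand : (fun x : ℝ => (lagMonicPoly γ m).eval x * x ^ l * lagWeight γ x) =
      fun x => ∑ k ∈ range (m + 1), lagMonicCoeff γ m k * (x ^ (k + l) * lagWeight γ x) := by
    funext x
    simp only [lagMonicPoly, eval_finsetSum, Finset.sum_mul, eval_mul, eval_C, eval_pow, eval_X]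
    exact Finset.sum_congr rfl fun k _ => by ring
  rw [hexpand, integral_finsetSum _ fun k _ =>
    (integrableOn_pow_mul_lagWeight hγ (k + l)).const_mul _]
  simp only [integral_const_mul, integral_pow_mul_lagWeight hγ]
  rw [Finset.sum_congr rfl hterm, ← Finset.mul_sum,
    sum_range_neg_one_pow_mul_choose_mul_ascPochhammer_eval hl]
  split_ifs <;> ring

theorem integral_lagMonicPoly_mul (hγ : -1 < γ) {m : ℕ} {P : ℝ[X]} (hP : P.natDegree ≤ m) :
    ∫ x in Set.Ioi 0, (lagMonicPoly γ m).eval x * P.eval x * lagWeight γ x =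
      P.coeff m * (m.factorial * Real.Gamma ((m : ℝ) + γ + 1)) := by
  have hexpand : (fun x : ℝ => (lagMonicPoly γ m).eval x * P.eval x * lagWeight γ x) =
      fun x => ∑ l ∈ range (m + 1),
        P.coeff l * ((lagMonicPoly γ m).eval x * x ^ l * lagWeight γ x) := by
    funext x
    rw [eval_eq_sum_range' (Nat.lt_succ_of_le hP), Finset.mul_sum, Finset.sum_mul]
    exact Finset.sum_congr rfl fun l _ => by ring
  have hint (l : ℕ) : IntegrableOn
      (fun x : ℝ => (lagMonicPoly γ m).eval x * x ^ l * lagWeight γ x) (Set.Ioi 0) := by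
    have := integrableOn_eval_mul_eval_mul_lagWeight hγ (lagMonicPoly γ m) (X ^ l)
    simp only [eval_pow, eval_X] at this
    exact this
  rw [hexpand, integral_finsetSum _ fun l _ => (hint l).const_mul (P.coeff l)]
  simp only [integral_const_mul]
  rw [Finset.sum_congr rfl fun l hl => by
    rw [integral_lagMonicPoly_mul_pow hγ (Nat.lt_succ_iff.mp (Finset.mem_range.mp hl)), mul_ite,
      mul_zero], Finset.sum_ite_eq' _ _, if_pos (Finset.self_mem_range_succ m)]

variable (γ) in
theorem lagInner_comm (P Q : ℝ[X]) : lagInner γ P Q = lagInner γ Q P := by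
  simp only [lagInner, mul_comm (P.eval _)]

theorem lagInner_add_left (hγ : -1 < γ) (P₁ P₂ Q : ℝ[X]) :
    lagInner γ (P₁ + P₂) Q = lagInner γ P₁ Q + lagInner γ P₂ Q := by
  simp only [lagInner, eval_add, add_mul, ← mul_add]
  rw [integral_add (integrableOn_eval_mul_eval_mul_lagWeight hγ P₁ Q)
    (integrableOn_eval_mul_eval_mul_lagWeight hγ P₂ Q)]

theorem lagInner_add_right (hγ : -1 < γ) (P Q₁ Q₂ : ℝ[X]) :
    lagInner γ P (Q₁ + Q₂) = lagInner γ P Q₁ + lagInner γ P Q₂ := by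
  simp only [lagInner_comm γ P, lagInner_add_left hγ]

variable (γ) in
theorem lagInner_C_mul_left (a : ℝ) (P Q : ℝ[X]) :
    lagInner γ (C a * P) Q = a * lagInner γ P Q := by
  simp only [lagInner, eval_mul, eval_C, mul_assoc, integral_const_mul]
  ring

variable (γ) in
theorem lagInner_C_mul_right (a : ℝ) (P Q : ℝ[X]) :
    lagInner γ P (C a * Q) = a * lagInner γ P Q := by
  simp only [lagInner_comm γ P, lagInner_C_mul_left]

theorem lagInner_lagMonicPoly (hγ : -1 < γ) (m l : ℕ) :
    lagInner γ (lagMonicPoly γ m) (lagMonicPoly γ l) = if m = l then lagNorm γ m else 0 := by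
  wlog hlm : l ≤ m generalizing m l
  · rw [lagInner_comm, this l m (by omega)]
    rcases eq_or_ne m l with rfl | h
    · rfl
    · simp [h, h.symm]
  have hΓ : Real.Gamma ((m : ℝ) + γ + 1) =
      (ascPochhammer ℝ m).eval (γ + 1) * Real.Gamma (γ + 1) := by
    rw [show (m : ℝ) + γ + 1 = (γ + 1) + m by ring]
    exact Real.Gamma_add_nat_eq_ascPochhammer_mul
      (fun k h => by linarith [k.cast_nonneg (α := ℝ)]) m
  rw [lagInner, integral_lagMonicPoly_mul hγ ((natDegree_lagMonicPoly_le γ l).trans hlm),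
    coeff_lagMonicPoly, hΓ]
  rcases hlm.lt_or_eq with hlt | rfl
  · simp [lagMonicCoeff_of_lt γ hlt, hlt.ne']
  · rw [lagMonicCoeff_self hγ, if_pos rfl, lagNorm]
    field_simp [(Real.Gamma_pos_of_pos (by linarith : 0 < γ + 1)).ne']

theorem lagInner_lagQPoly_self (hγ : -1 < γ) (a : ℕ) :
    lagInner γ (lagQPoly γ a) (lagQPoly γ a) = lagNorm γ a + a ^ 2 * lagNorm γ (a - 1) := by
  simp only [lagQPoly, lagInner_add_left hγ, lagInner_add_right hγ, lagInner_C_mul_left,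
    lagInner_C_mul_right, lagInner_lagMonicPoly hγ]
  rcases a with _ | a
  · simp
  · simp only [Nat.add_sub_cancel, if_neg (Nat.succ_ne_self a), if_neg (Nat.succ_ne_self a).symm]
    push_cast
    ring

theorem lagInner_derivative_lagQPoly (hγ : -1 < γ) (a b : ℕ) :
    lagInner γ (derivative (lagQPoly γ a)) (derivative (lagQPoly γ b)) =
      if a = b then a ^ 2 * lagNorm γ (a - 1) else 0 := by
  rw [derivative_lagQPoly hγ, derivative_lagQPoly hγ, lagInner_C_mul_left, lagInner_C_mul_right,
    lagInner_lagMonicPoly hγ]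
  rcases eq_or_ne a b with rfl | hab
  · rw [if_pos rfl, if_pos rfl]
    ring
  · rw [if_neg hab]
    split_ifs with h
    · rcases (by omega : a = 0 ∨ b = 0) with rfl | rfl <;> simp
    · simp

end Laguerre

theorem lagGrad_eval_mul_eval {α β : ℝ} (hα : -1 < α) (hβ : -1 < β) (P₁ Q₁ P₂ Q₂ : ℝ[X]) :
    lagGrad α β (fun x y => P₁.eval x * Q₁.eval y) (fun x y => P₂.eval x * Q₂.eval y) =
      lagInner α (derivative P₁) (derivative P₂) * lagInner β Q₁ Q₂ +
        lagInner α P₁ P₂ * lagInner β (derivative Q₁) (derivative Q₂) := by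
  have hsplit : (fun p : ℝ × ℝ =>
      (deriv (fun t => P₁.eval t * Q₁.eval p.2) p.1 *
          deriv (fun t => P₂.eval t * Q₂.eval p.2) p.1 +
        deriv (fun t => P₁.eval p.1 * Q₁.eval t) p.2 *
          deriv (fun t => P₂.eval p.1 * Q₂.eval t) p.2) *
      (Real.rpow p.1 α * Real.exp (-p.1) * (Real.rpow p.2 β * Real.exp (-p.2)))) =
      fun p => (derivative P₁).eval p.1 * (derivative P₂).eval p.1 * lagWeight α p.1 *
          (Q₁.eval p.2 * Q₂.eval p.2 * lagWeight β p.2) +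
        P₁.eval p.1 * P₂.eval p.1 * lagWeight α p.1 *
          ((derivative Q₁).eval p.2 * (derivative Q₂).eval p.2 * lagWeight β p.2) := by
    funext p
    simp only [deriv_mul_const_field, deriv_const_mul_field, Polynomial.deriv, Real.rpow_eq_pow,
      lagWeight]
    ring
  rw [lagGrad, hsplit, Measure.volume_eq_prod, ← Measure.prod_restrict,
    integral_add ((integrableOn_eval_mul_eval_mul_lagWeight hα _ _).mul_prod
        (integrableOn_eval_mul_eval_mul_lagWeight hβ _ _))
      ((integrableOn_eval_mul_eval_mul_lagWeight hα _ _).mul_prod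
        (integrableOn_eval_mul_eval_mul_lagWeight hβ _ _)),
    integral_prod_mul (fun x => (derivative P₁).eval x * (derivative P₂).eval x * lagWeight α x)
      (fun y => Q₁.eval y * Q₂.eval y * lagWeight β y),
    integral_prod_mul (fun x => P₁.eval x * P₂.eval x * lagWeight α x)
      (fun y => (derivative Q₁).eval y * (derivative Q₂).eval y * lagWeight β y)]
  simp only [lagInner]
  ring

theorem lagQ2_eq_eval (α β : ℝ) (n k : ℕ) :
    lagQ2 α β n k = fun x y => (lagQPoly α (n - k)).eval x * (lagQPoly β k).eval y := by
  funext x y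
  simp only [lagQ2, lagQ_eq_eval]

theorem hkn_eq_lagNorm_mul_lagNorm (α β : ℝ) (k m : ℕ) :
    hkn α β k m = lagNorm α (m - k) * lagNorm β k := by
  simp only [hkn, lagNorm]
  ring

theorem lagGrad_gram_diagonal_general (α β : ℝ) (hα : -1 < α) (hβ : -1 < β) (n : ℕ)
    (i j : ℕ) (hj : j ≤ n) :
    lagGrad α β (lagQ2 α β n i) (lagQ2 α β n j)
      = if i = j then
          ((n : ℝ) - j) ^ 2 * hkn α β j (n - 1) + (j : ℝ) ^ 2 * hkn α β (j - 1) (n - 1)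
            + 2 * (j : ℝ) ^ 2 * ((n : ℝ) - j) ^ 2 * hkn α β (j - 1) (n - 2)
        else 0 := by
  rw [lagQ2_eq_eval, lagQ2_eq_eval, lagGrad_eval_mul_eval hα hβ]
  split_ifs with hij
  · subst hij
    rw [lagInner_derivative_lagQPoly hα, lagInner_derivative_lagQPoly hβ, if_pos rfl, if_pos rfl,
      lagInner_lagQPoly_self hα, lagInner_lagQPoly_self hβ, Nat.cast_sub hj]
    simp only [hkn_eq_lagNorm_mul_lagNorm]
    rcases Nat.eq_zero_or_pos i with rfl | hi
    · simp only [Nat.cast_zero, Nat.sub_zero, Nat.zero_sub, ne_eq, OfNat.ofNat_ne_zero,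
        not_false_eq_true, zero_pow, zero_mul, mul_zero, add_zero]
      ring
    · rw [show n - 1 - i = n - i - 1 by omega, show n - 1 - (i - 1) = n - i by omega,
        show n - 2 - (i - 1) = n - i - 1 by omega]
      ring
  · have hx :
        lagInner α (derivative (lagQPoly α (n - i))) (derivative (lagQPoly α (n - j))) = 0 := by
      rw [lagInner_derivative_lagQPoly hα]
      split_ifs with h
      · simp [show n - i = 0 by omega]
      · rfl
    have hy : lagInner β (derivative (lagQPoly β i)) (derivative (lagQPoly β j)) = 0 := by
      rw [lagInner_derivative_lagQPoly hβ, if_neg hij]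
    rw [hx, hy]
    ring

/-- The Gram matrix `D_n = ⟨𝕼_n, 𝕼_n^T⟩_∇` for the product Laguerre weight is diagonal,
with diagonal entries `d_j^n = (n-j)² h_j^{n-1} + j² h_{j-1}^{n-1} + 2 j² (n-j)² h_{j-1}^{n-2}`. -/
theorem lagGrad_gram_diagonal (α β : ℝ) (hα : -1 < α) (hβ : -1 < β) (n : ℕ)
    (i j : ℕ) (hi : i ≤ n) (hj : j ≤ n) :
    lagGrad α β (lagQ2 α β n i) (lagQ2 α β n j)
      = if i = j then
          ((n : ℝ) - j) ^ 2 * hkn α β j (n - 1) + (j : ℝ) ^ 2 * hkn α β (j - 1) (n - 1)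
            + 2 * (j : ℝ) ^ 2 * ((n : ℝ) - j) ^ 2 * hkn α β (j - 1) (n - 2)
        else 0 :=
  lagGrad_gram_diagonal_general α β hα hβ n i j hj
end

section
/- For the product Gegenbauer weight, define Q_k^n(x,y) = q_{n-k}(u_α;x) q_k(u_β;y) where q_m(u_γ;x) = p_m(u_γ;x) + m b_{m-1}(γ) p_{m-2}(u_γ;x) and b_{m-1}(γ) = -(m-1)/(4(m+γ-1)(m+γ-2)). Then for 1 ≤ k ≤ n-1: ∂_x Q_k^n = (n-k)[P_k^{n-1} + k b_{k-1}(β) P_{k-2}^{n-3}] and ∂_y Q_k^n = k[P_{k-1}^{n-1} + (n-k) b_{n-k-1}(α) P_{k-1}^{n-3}], where P_j^m(x,y) = p_{m-j}(u_α;x) p_j(u_β;y). -/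
open Finset MeasureTheory

/-- The classical Gegenbauer (ultraspherical) polynomial. -/
noncomputable def gegenbauer (α : ℝ) (n : ℕ) (x : ℝ) : ℝ :=
  ∑ k ∈ Finset.range (n / 2 + 1),
    (-1) ^ k * Real.Gamma (((n - k : ℕ) : ℝ) + α) /
      (Real.Gamma α * k.factorial * (n - 2 * k).factorial) * (2 * x) ^ (n - 2 * k)

/-- The monic Gegenbauer polynomial `p_n(u_α;x) = 2^{-n} binom(n+α-1,n)^{-1} C_n^α(x)`. -/
noncomputable def gegMonic (α : ℝ) (n : ℕ) (x : ℝ) : ℝ :=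
  (Real.Gamma α * n.factorial / (2 ^ n * Real.Gamma ((n : ℝ) + α))) * gegenbauer α n x

/-- The coefficient `b_j(α) = -j/(4(j+α)(j+α-1))`, so that
`b_{m-1}(α) = -(m-1)/(4(m+α-1)(m+α-2))`. -/
noncomputable def bcoef (j : ℕ) (α : ℝ) : ℝ :=
  -((j : ℝ) / (4 * ((j : ℝ) + α) * ((j : ℝ) + α - 1)))

/-- `q_m(u_α;x) = p_m(u_α;x) + m·b_{m-1}(α)·p_{m-2}(u_α;x)`. -/
noncomputable def gegQ (α : ℝ) (m : ℕ) (x : ℝ) : ℝ :=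
  gegMonic α m x + m * bcoef (m - 1) α * gegMonic α (m - 2) x

/-- The product monic Gegenbauer polynomials `P_j^m(x,y) = p_{m-j}(u_α;x) p_j(u_β;y)`. -/
noncomputable def gegP (α β : ℝ) (m j : ℕ) (x y : ℝ) : ℝ :=
  gegMonic α (m - j) x * gegMonic β j y

/-- The polynomials `Q_k^n(x,y) = q_{n-k}(u_α;x) q_k(u_β;y)`. -/
noncomputable def gegQ2 (α β : ℝ) (n k : ℕ) (x y : ℝ) : ℝ :=
  gegQ α (n - k) x * gegQ β k y

/-- The normalized gradient bilinear form for the product Gegenbauer weight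
`U_{α,β}(x,y) = (1-x²)^{α-1/2}(1-y²)^{β-1/2}` on `[-1,1]²`; the normalizing constant is
`c_{α,β} = Γ(α+1)Γ(β+1)/(Γ(α+1/2)Γ(β+1/2)Γ(1/2)²)` with `Γ(1/2)² = π`. -/
noncomputable def gegGrad (α β : ℝ) (f g : ℝ → ℝ → ℝ) : ℝ :=
  (Real.Gamma (α + 1) * Real.Gamma (β + 1) /
      (Real.Gamma (α + 1 / 2) * Real.Gamma (β + 1 / 2) * Real.pi)) *
    ∫ p in (Set.Ioc (-1 : ℝ) 1) ×ˢ (Set.Ioc (-1 : ℝ) 1),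
      (deriv (fun t => f t p.2) p.1 * deriv (fun t => g t p.2) p.1 +
        deriv (fun t => f p.1 t) p.2 * deriv (fun t => g p.1 t) p.2) *
      (Real.rpow (1 - p.1 ^ 2) (α - 1 / 2) * Real.rpow (1 - p.2 ^ 2) (β - 1 / 2))

/-- `h_n^γ = 2^{1-2γ-2n} √π n! Γ(γ+1) Γ(n+2γ) / (Γ(γ+1/2) Γ(n+γ) Γ(n+γ+1))`. -/
noncomputable def hGeg (γ : ℝ) (n : ℕ) : ℝ :=
  Real.rpow 2 (1 - 2 * γ - 2 * n) * Real.sqrt Real.pi * n.factorial * Real.Gamma (γ + 1) *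
    Real.Gamma ((n : ℝ) + 2 * γ) /
      (Real.Gamma (γ + 1 / 2) * Real.Gamma ((n : ℝ) + γ) * Real.Gamma ((n : ℝ) + γ + 1))
/-!
Expanding `p_m(u_α; x) = ∑ₖ c_{m,k} x^{m-2k}` with `c_{m,k}` an explicit quotient of Gamma values
and factorials, the identity `q_m' = m p_{m-1}` becomes, coefficientwise, a three-term relation
between `c_{n+2,j+1}`, `c_{n,j}` and `c_{n+1,j+1}`; it follows from the two ratios
`c_{n+1,k} / c_{n,k}` and `c_{n+1,j+1} / c_{n,j}`, both read off from `Γ(s+1) = s Γ(s)`.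
The partial derivatives of `Q_k^n = q_{n-k}(x) q_k(y)` then come from the product rule.
-/

open scoped Nat

noncomputable def gegCoeff (α : ℝ) (n k : ℕ) : ℝ :=
  (-1) ^ k * n ! * Real.Gamma ((n - k : ℕ) + α) /
    (4 ^ k * k ! * (n - 2 * k)! * Real.Gamma (n + α))

noncomputable def gegMonicDeriv (α : ℝ) (n : ℕ) (x : ℝ) : ℝ :=
  ∑ k ∈ range (n / 2 + 1), gegCoeff α n k * ((n - 2 * k : ℕ) * x ^ (n - 2 * k - 1))

section Gegenbauer

variable {α : ℝ}

lemma gegCoeff_zero {n : ℕ} (h : Real.Gamma (n + α) ≠ 0) : gegCoeff α n 0 = 1 := by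
  simp [gegCoeff, h, Nat.factorial_ne_zero]

lemma Gamma_natCast_succ_add {n : ℕ} (h : 0 < (n : ℝ) + α) :
    Real.Gamma ((n + 1 : ℕ) + α) = (n + α) * Real.Gamma (n + α) := by
  rw [Nat.cast_succ, add_right_comm, Real.Gamma_add_one h.ne']

lemma gegCoeff_succ {n k : ℕ} (hk : 2 * k ≤ n) (hpos : 0 < ((n - k : ℕ) : ℝ) + α) :
    ((n + 1 - 2 * k : ℕ) : ℝ) * (n + α) * gegCoeff α (n + 1) k
      = (n + 1) * ((n - k : ℕ) + α) * gegCoeff α n k := by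
  have hn : (0 : ℝ) < n + α := by
    have : ((n - k : ℕ) : ℝ) ≤ n := by exact_mod_cast Nat.sub_le n k
    linarith
  have hΓ := (Real.Gamma_pos_of_pos hn).ne'
  simp only [gegCoeff, show n + 1 - k = (n - k) + 1 by omega,
    show n + 1 - 2 * k = (n - 2 * k) + 1 by omega, Nat.factorial_succ]
  rw [Gamma_natCast_succ_add hpos, Gamma_natCast_succ_add hn]
  push_cast
  field_simp

lemma gegCoeff_succ_succ {n j : ℕ} (hj : 2 * j + 1 ≤ n) (hpos : 0 < (n : ℝ) + α) :
    4 * (j + 1) * (n + α) * gegCoeff α (n + 1) (j + 1)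
      = -((n + 1) * (n - 2 * j : ℕ) * gegCoeff α n j) := by
  have hΓ := (Real.Gamma_pos_of_pos hpos).ne'
  have hd : ((n + 1 - 2 * (j + 1) : ℕ) : ℝ) + 1 ≠ 0 := by positivity
  simp only [gegCoeff, show n + 1 - (j + 1) = n - j by omega,
    show n - 2 * j = (n + 1 - 2 * (j + 1)) + 1 by omega, Nat.factorial_succ]
  rw [Gamma_natCast_succ_add hpos]
  push_cast
  field_simp
  ring

lemma gegCoeff_recurrence (hα : -1 < α) {n j : ℕ} (hj : 2 * j + 1 ≤ n) :
    ((n - 2 * j : ℕ) : ℝ) *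
        (gegCoeff α (n + 2) (j + 1) + (n + 2) * bcoef (n + 1) α * gegCoeff α n j)
      = (n + 2) * gegCoeff α (n + 1) (j + 1) := by
  have hn : (1 : ℝ) ≤ n := by exact_mod_cast (show 1 ≤ n by omega)
  have hpos : 0 < ((n + 1 - (j + 1) : ℕ) : ℝ) + α := by
    have : (1 : ℝ) ≤ ((n + 1 - (j + 1) : ℕ) : ℝ) := by norm_cast; omega
    linarith
  have h1 := gegCoeff_succ (n := n + 1) (k := j + 1) (by omega) hpos
  have h2 := gegCoeff_succ_succ (α := α) hj (by linarith)
  rw [show n + 1 + 1 - 2 * (j + 1) = n - 2 * j by omega,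
    show n + 1 - (j + 1) = n - j by omega] at h1
  push_cast [show j ≤ n by omega] at h1
  have hb : bcoef (n + 1) α = -((n + 1) / (4 * (n + 1 + α) * (n + α))) := by
    unfold bcoef; push_cast; ring_nf
  have : (n : ℝ) + α ≠ 0 := by linarith
  have : (n : ℝ) + 1 + α ≠ 0 := by linarith
  rw [hb]
  field_simp
  linear_combination (4 * (n + α)) * h1 - (n + 2) * h2

lemma gegMonic_eq_sum (hΓ : Real.Gamma α ≠ 0) (n : ℕ) (x : ℝ) :
    gegMonic α n x = ∑ k ∈ range (n / 2 + 1), gegCoeff α n k * x ^ (n - 2 * k) := by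
  rw [gegMonic, gegenbauer, mul_sum]
  refine sum_congr rfl fun k hk => ?_
  have hkn : 2 * k ≤ n := by have := mem_range.mp hk; omega
  have h2 : (2 : ℝ) ^ n = 2 ^ (n - 2 * k) * 4 ^ k := by
    rw [show (4 : ℝ) = 2 ^ 2 by norm_num, ← pow_mul, ← pow_add, Nat.sub_add_cancel (by omega)]
  rcases eq_or_ne (Real.Gamma (n + α)) 0 with h | h
  · simp [gegCoeff, h]
  rw [gegCoeff, mul_pow, h2]
  field_simp

lemma hasDerivAt_gegMonic (hΓ : Real.Gamma α ≠ 0) (n : ℕ) (x : ℝ) :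
    HasDerivAt (gegMonic α n) (gegMonicDeriv α n x) x := by
  rw [show gegMonic α n = _ from funext (gegMonic_eq_sum hΓ n), gegMonicDeriv]
  exact HasDerivAt.fun_sum fun k _ => (hasDerivAt_pow _ x).const_mul _

lemma gegMonicDeriv_add_bcoef_mul (hα : -1 < α) (hΓ : Real.Gamma α ≠ 0) (m : ℕ) (x : ℝ) :
    gegMonicDeriv α m x + m * bcoef (m - 1) α * gegMonicDeriv α (m - 2) x
      = m * gegMonic α (m - 1) x := by
  rw [gegMonic_eq_sum hΓ]
  match m with
  | 0 => simp [gegMonicDeriv]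
  | 1 =>
    have h1 : Real.Gamma ((1 : ℕ) + α) ≠ 0 := (Real.Gamma_pos_of_pos (by push_cast; linarith)).ne'
    simp [gegMonicDeriv, bcoef, gegCoeff_zero (n := 0) (by simpa using hΓ), gegCoeff_zero h1]
  | n + 2 =>
    have hD : ∑ k ∈ range ((n + 2) / 2 + 1), gegCoeff α (n + 2) k *
        ((n + 2 - 2 * k : ℕ) * x ^ (n + 2 - 2 * k - 1))
        = ∑ k ∈ range ((n + 1) / 2 + 1), gegCoeff α (n + 2) k *
          ((n + 2 - 2 * k : ℕ) * x ^ (n + 2 - 2 * k - 1)) :=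
      eventually_constant_sum (fun k hk => by simp [show n + 2 - 2 * k = 0 by omega]) (by omega)
    have hD' : ∑ k ∈ range (n / 2 + 1), gegCoeff α n k * ((n - 2 * k : ℕ) * x ^ (n - 2 * k - 1))
        = ∑ k ∈ range ((n + 1) / 2), gegCoeff α n k * ((n - 2 * k : ℕ) * x ^ (n - 2 * k - 1)) :=
      eventually_constant_sum (fun k hk => by simp [show n - 2 * k = 0 by omega]) (by omega)
    have h0 : Real.Gamma ((n + 2 : ℕ) + α) ≠ 0 :=
      (Real.Gamma_pos_of_pos (by push_cast; linarith)).ne'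
    have h0' : Real.Gamma ((n + 1 : ℕ) + α) ≠ 0 :=
      (Real.Gamma_pos_of_pos (by push_cast; linarith)).ne'
    simp only [gegMonicDeriv, Nat.add_sub_cancel, show n + 2 - 1 = n + 1 by omega]
    rw [hD, hD', sum_range_succ', sum_range_succ', mul_sum, mul_add, mul_sum, add_right_comm,
      ← sum_add_distrib]
    congr 1
    · refine sum_congr rfl fun j hj => ?_
      have hj : 2 * j + 1 ≤ n := by have := mem_range.mp hj; omega
      rw [show n + 2 - 2 * (j + 1) = n - 2 * j by omega,
        show n + 1 - 2 * (j + 1) = n - 2 * j - 1 by omega]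
      push_cast
      linear_combination x ^ (n - 2 * j - 1) * gegCoeff_recurrence hα hj
    · simp [gegCoeff_zero h0, gegCoeff_zero h0']

lemma hasDerivAt_gegQ (hα : -1 < α) (m : ℕ) (x : ℝ) :
    HasDerivAt (gegQ α m) (m * gegMonic α (m - 1) x) x := by
  by_cases hΓ : Real.Gamma α = 0
  -- `Real.Gamma 0 = 0`, and the definition of `gegMonic` then divides by zero: all of them vanish.
  · have hzero : ∀ n t, gegMonic α n t = 0 := by simp [gegMonic, hΓ]
    simp only [show gegQ α m = fun _ => 0 from funext fun t => by simp [gegQ, hzero], hzero,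
      mul_zero]
    exact hasDerivAt_const x 0
  rw [← gegMonicDeriv_add_bcoef_mul hα hΓ]
  exact (hasDerivAt_gegMonic hΓ m x).add ((hasDerivAt_gegMonic hΓ (m - 2) x).const_mul _)

end Gegenbauer

theorem gegQ2_partials_general (α β : ℝ) (hα : -(1 / 2 : ℝ) < α) (hβ : -(1 / 2 : ℝ) < β)
    (n k : ℕ) (hk : 1 ≤ k) (hkn : k ≤ n - 1) (x y : ℝ) :
    deriv (fun t => gegQ2 α β n k t y) x
      = ((n : ℝ) - k) * (gegP α β (n - 1) k x y
          + (k : ℝ) * bcoef (k - 1) β * gegP α β (n - 3) (k - 2) x y) ∧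
    deriv (fun t => gegQ2 α β n k x t) y
      = (k : ℝ) * (gegP α β (n - 1) (k - 1) x y
          + ((n : ℝ) - k) * bcoef (n - k - 1) α * gegP α β (n - 3) (k - 1) x y) := by
  have hcast : ((n - k : ℕ) : ℝ) = n - k := Nat.cast_sub (by omega)
  constructor
  · rw [show (fun t => gegQ2 α β n k t y) = fun t => gegQ α (n - k) t * gegQ β k y from rfl,
      ((hasDerivAt_gegQ (by linarith) (n - k) x).mul_const _).deriv]
    have hlow : (k : ℝ) * bcoef (k - 1) β * gegMonic α (n - 3 - (k - 2)) x
        = k * bcoef (k - 1) β * gegMonic α (n - k - 1) x := by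
      rcases Nat.lt_or_ge k 2 with hk2 | hk2
      · simp [show k = 1 by omega, bcoef]
      · rw [show n - 3 - (k - 2) = n - k - 1 by omega]
    rw [gegP, gegP, show n - 1 - k = n - k - 1 by omega, hcast, gegQ]
    linear_combination (k - (n : ℝ)) * gegMonic β (k - 2) y * hlow
  · rw [show (fun t => gegQ2 α β n k x t) = fun t => gegQ α (n - k) x * gegQ β k t from rfl,
      ((hasDerivAt_gegQ (by linarith) k y).const_mul _).deriv]
    rw [gegP, gegP, show n - 1 - (k - 1) = n - k by omega,
      show n - 3 - (k - 1) = n - k - 2 by omega, gegQ, hcast]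
    ring

/-- Partial derivatives of `Q_k^n` for `1 ≤ k ≤ n-1` in the product Gegenbauer setting:
`∂_x Q_k^n = (n-k)[P_k^{n-1} + k b_{k-1}(β) P_{k-2}^{n-3}]` and
`∂_y Q_k^n = k[P_{k-1}^{n-1} + (n-k) b_{n-k-1}(α) P_{k-1}^{n-3}]`. -/
theorem gegQ2_partials (α β : ℝ) (hα : -(1 / 2 : ℝ) < α) (hβ : -(1 / 2 : ℝ) < β)
    (n k : ℕ) (hk : 1 ≤ k) (hkn : k ≤ n - 1) (hn : 1 ≤ n) (x y : ℝ) :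
    deriv (fun t => gegQ2 α β n k t y) x
      = ((n : ℝ) - k) * (gegP α β (n - 1) k x y
          + (k : ℝ) * bcoef (k - 1) β * gegP α β (n - 3) (k - 2) x y) ∧
    deriv (fun t => gegQ2 α β n k x t) y
      = (k : ℝ) * (gegP α β (n - 1) (k - 1) x y
          + ((n : ℝ) - k) * bcoef (n - k - 1) α * gegP α β (n - 3) (k - 1) x y) :=
  gegQ2_partials_general α β hα hβ n k hk hkn x y
end
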